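/- arXiv:0908.2050 — 2 statements merged into one kernel-verified Lean document; each statement's English description precedes it below -/
import Mathlib

section
/- Let X be a type of variables and let values be the integers ℤ. Let p be a propagator on ℤ-domains (contracting and monotonic) that is bounds(D)-complete, i.e., p d' x ⊆ hull(dom(c_p ∩ ⟦d'⟧) x) for every domain d' and every x, where c_p is the constraint induced by p. Let φ be a hull-injective view on ℤ. Then the derived propagator φ̂(p) is bounds(D)-complete: φ̂(p) d x ⊆ hull(dom((φ_Asn ⁻¹' c_p) ∩ ⟦d⟧) x) for every domain d and every x. -/
/-- The integer hull of a set of integers. -/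
def hullZ (S : Set ℤ) : Set ℤ := {v : ℤ | ∃ m ∈ S, ∃ n ∈ S, m ≤ v ∧ v ≤ n}

/-- The lifting of a view to assignments. -/
def liftAsn {X : Type*} (φ : X → ℤ → ℤ) (a : X → ℤ) : X → ℤ := fun x => φ x (a x)

/-- The set of assignments licensed by a domain. -/
def licensed {X : Type*} (d : X → Set ℤ) : Set (X → ℤ) := {a | ∀ x, a x ∈ d x}

/-- The domain relaxation of a constraint. -/
def domRel {X : Type*} (c : Set (X → ℤ)) : X → Set ℤ := fun x => (fun a : X → ℤ => a x) '' c

/-- The constraint induced by a propagator. -/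
def induced {X : Type*} (p : (X → Set ℤ) → (X → Set ℤ)) : Set (X → ℤ) :=
  {a | p (fun x => {a x}) = fun x => {a x}}

/-- The propagator derived from `p` via the view `φ`. -/
def derived {X : Type*} (φ : X → ℤ → ℤ)
    (p : (X → Set ℤ) → (X → Set ℤ)) (d : X → Set ℤ) : X → Set ℤ :=
  fun x => (φ x) ⁻¹' (p (fun y => φ y '' d y) x)

/-- bounds(D) completeness is inherited under hull-injective views. -/
theorem derived_boundsD_complete {X : Type*}
    (p : (X → Set ℤ) → (X → Set ℤ))
    (hcontr : ∀ d x, p d x ⊆ d x)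
    (hmono : ∀ d' d : X → Set ℤ, (∀ x, d' x ⊆ d x) → ∀ x, p d' x ⊆ p d x)
    (hcplt : ∀ (d' : X → Set ℤ) (x : X),
        p d' x ⊆ hullZ (domRel (induced p ∩ licensed d') x))
    (φ : X → ℤ → ℤ) (hφ : ∀ x, Function.Injective (φ x))
    (hinj : ∀ c : Set (X → ℤ), c ⊆ Set.range (liftAsn φ) → ∀ x : X,
        (φ x) ⁻¹' hullZ (domRel c x) = hullZ (domRel (liftAsn φ ⁻¹' c) x)) :
    ∀ (d : X → Set ℤ) (x : X),
      derived φ p d x ⊆ hullZ (domRel (liftAsn φ ⁻¹' induced p ∩ licensed d) x) := by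
  intro d x v hv
  have hc : (induced p ∩ licensed (fun y => φ y '' d y)) ⊆ Set.range (liftAsn φ) := by
    rintro a ⟨-, ha⟩
    choose b hb hba using fun y => ha y
    exact ⟨b, funext fun y => hba y⟩
  have key := hinj _ hc x
  have h1 : φ x v ∈ hullZ (domRel (induced p ∩ licensed (fun y => φ y '' d y)) x) :=
    hcplt _ x hv
  have h2 : v ∈ hullZ (domRel (liftAsn φ ⁻¹' (induced p ∩ licensed (fun y => φ y '' d y))) x) := by
    rw [← key]; exact h1
  have heq : liftAsn φ ⁻¹' (induced p ∩ licensed (fun y => φ y '' d y)) =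
      liftAsn φ ⁻¹' induced p ∩ licensed d := by
    ext b
    simp only [Set.mem_preimage, Set.mem_inter_iff, licensed, Set.mem_setOf_eq, liftAsn]
    constructor
    · rintro ⟨h1, h2⟩
      exact ⟨h1, fun y => by rcases h2 y with ⟨w, hw, he⟩; rwa [← hφ y he]⟩
    · rintro ⟨h1, h2⟩
      exact ⟨h1, fun y => ⟨b y, h2 y, rfl⟩⟩
  rwa [heq] at h2
end

section
/- Let X be a type of variables and let values be the integers ℤ. Let p be a propagator on ℤ-domains (contracting and monotonic) that is range-complete, i.e., p d' x ⊆ dom(c_p ∩ ⟦hull d'⟧) x for every domain d' and every x, where c_p is the constraint induced by p. Let φ be a hull-surjective view on ℤ. Then the derived propagator φ̂(p) is range-complete: φ̂(p) d x ⊆ dom((φ_Asn ⁻¹' c_p) ∩ ⟦hull d⟧) x for every domain d and every x. -/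
/-- range completeness is inherited under hull-surjective views. -/
theorem derived_range_complete {X : Type*}
    (p : (X → Set ℤ) → (X → Set ℤ))
    (hcontr : ∀ d x, p d x ⊆ d x)
    (hmono : ∀ d' d : X → Set ℤ, (∀ x, d' x ⊆ d x) → ∀ x, p d' x ⊆ p d x)
    (hcplt : ∀ (d' : X → Set ℤ) (x : X),
        p d' x ⊆ domRel (induced p ∩ licensed (fun y => hullZ (d' y))) x)
    (φ : X → ℤ → ℤ) (hφ : ∀ x, Function.Injective (φ x))
    (hsurj : ∀ (x : X) (S : Set ℤ), φ x '' hullZ S = hullZ (φ x '' S)) :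
    ∀ (d : X → Set ℤ) (x : X),
      derived φ p d x ⊆
        domRel (liftAsn φ ⁻¹' induced p ∩ licensed (fun y => hullZ (d y))) x := by
  intro d x v hv
  have hv' : φ x v ∈ p (fun y => φ y '' d y) x := hv
  obtain ⟨a, ⟨hind, hlic⟩, hax⟩ := hcplt (fun y => φ y '' d y) x hv'
  -- For each y, a y ∈ hullZ (φ y '' d y) = φ y '' hullZ (d y)
  have hmem : ∀ y, a y ∈ φ y '' hullZ (d y) := by
    intro y
    rw [hsurj]
    exact hlic y
  choose b hb hba using hmem
  refine ⟨b, ⟨?_, fun y => hb y⟩, ?_⟩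
  · have : liftAsn φ b = a := funext fun y => hba y
    simpa [Set.mem_preimage, this] using hind
  · exact hφ x (by rw [hba x]; exact hax)
end
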